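/- arXiv:2507.14653 — 5 statements merged into one kernel-verified Lean document; each statement's English description precedes it below -/
import Mathlib

section
/- Let V be continuously differentiable and suppose the feedback controlled system satisfies ∇V(x)·f(x, u(x)) ≤ -V(x) for all x. If the event function h(x,e) = ∇V(x)·(f(x, u(x+e)) - f(x, u(x))) - σV(x) with 0 < σ < 1 satisfies h(x(t), e(t)) ≤ 0 on an inter-event interval, then along the event-triggered trajectory ∇V(x(t))·f(x(t), u(x(t)+e(t))) ≤ -(1-σ)V(x(t)), and consequently V(x(t)) ≤ V(x(t_k)) e^{-(1-σ)(t - t_k)} for t ∈ [t_k, t_{k+1}). -/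
open Real Set

theorem HasGradientAt.comp_hasDerivAt {F : Type*} [NormedAddCommGroup F] [InnerProductSpace ℝ F]
    [CompleteSpace F] {V : F → ℝ} {g x' : F} {x : ℝ → F} {t : ℝ}
    (hV : HasGradientAt V g (x t)) (hx : HasDerivAt x x' t) :
    HasDerivAt (V ∘ x) (inner ℝ g x') t := by
  simpa using hV.hasFDerivAt.comp_hasDerivAt t hx

theorem le_mul_exp_of_hasDerivAt_le_neg_mul {φ φ' : ℝ → ℝ} {a b c : ℝ}
    (hφ : ∀ t ∈ Ico a b, HasDerivAt φ (φ' t) t) (hle : ∀ t ∈ Ico a b, φ' t ≤ -c * φ t) :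
    ∀ t ∈ Ico a b, φ t ≤ φ a * exp (-c * (t - a)) := by
  set ψ : ℝ → ℝ := fun t ↦ φ t * exp (c * (t - a))
  have hψ : ∀ t ∈ Ico a b, HasDerivAt ψ ((φ' t + c * φ t) * exp (c * (t - a))) t := by
    intro t ht
    have hexp : HasDerivAt (fun s ↦ exp (c * (s - a))) (exp (c * (t - a)) * c) t := by
      simpa using (((hasDerivAt_id t).sub_const a).const_mul c).exp
    exact ((hφ t ht).mul hexp).congr_deriv (by ring)
  have hanti : AntitoneOn ψ (Ico a b) := by
    refine antitoneOn_of_hasDerivWithinAt_nonpos (convex_Ico a b)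
      (f' := fun t ↦ (φ' t + c * φ t) * exp (c * (t - a)))
      (fun t ht ↦ (hψ t ht).continuousAt.continuousWithinAt) (fun t ht ↦ ?_) (fun t ht ↦ ?_)
    · exact (hψ t (interior_subset ht)).hasDerivWithinAt
    · exact mul_nonpos_of_nonpos_of_nonneg (by linarith [hle t (interior_subset ht)])
        (exp_pos _).le
  intro t ht
  have hψt : ψ t ≤ φ a := by
    simpa [ψ] using hanti ⟨le_rfl, ht.1.trans_lt ht.2⟩ ht ht.1
  calc φ t = ψ t * exp (-c * (t - a)) := by
        rw [mul_assoc, ← exp_add, neg_mul, add_neg_cancel, exp_zero, mul_one]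
    _ ≤ φ a * exp (-c * (t - a)) := by gcongr

theorem stmt_1_general {d m : ℕ}
    (f : EuclideanSpace ℝ (Fin d) → EuclideanSpace ℝ (Fin m) → EuclideanSpace ℝ (Fin d))
    (u : EuclideanSpace ℝ (Fin d) → EuclideanSpace ℝ (Fin m))
    (V : EuclideanSpace ℝ (Fin d) → ℝ) (hV : ContDiff ℝ 1 V)
    (σ : ℝ)
    (hfb : ∀ y, (inner ℝ (gradient V y) (f y (u y)) : ℝ) ≤ -V y)
    (tk tk1 : ℝ)
    (x e : ℝ → EuclideanSpace ℝ (Fin d))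
    (hxode : ∀ t ∈ Ico tk tk1, HasDerivAt x (f (x t) (u (x t + e t))) t)
    (hevent : ∀ t ∈ Ico tk tk1,
      (inner ℝ (gradient V (x t)) (f (x t) (u (x t + e t)) - f (x t) (u (x t))) : ℝ)
        - σ * V (x t) ≤ 0) :
    ∀ t ∈ Ico tk tk1,
      (inner ℝ (gradient V (x t)) (f (x t) (u (x t + e t))) : ℝ) ≤ -(1 - σ) * V (x t) ∧
      V (x t) ≤ V (x tk) * Real.exp (-(1 - σ) * (t - tk)) := by
  have hdecay : ∀ t ∈ Ico tk tk1,
      (inner ℝ (gradient V (x t)) (f (x t) (u (x t + e t))) : ℝ) ≤ -(1 - σ) * V (x t) := by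
    intro t ht
    have hsplit := hevent t ht
    rw [inner_sub_right] at hsplit
    linarith [hfb (x t)]
  have hVx : ∀ t ∈ Ico tk tk1, HasDerivAt (V ∘ x)
      (inner ℝ (gradient V (x t)) (f (x t) (u (x t + e t)))) t := fun t ht ↦
    ((hV.differentiable one_ne_zero) (x t)).hasGradientAt.comp_hasDerivAt (hxode t ht)
  exact fun t ht ↦ ⟨hdecay t ht, le_mul_exp_of_hasDerivAt_le_neg_mul hVx hdecay t ht⟩

/-- On an inter-event interval, if the feedback Lyapunov condition
`⟪∇V, f(x,u(x))⟫ ≤ -V` holds and the event function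
`h(x,e) = ⟪∇V(x), f(x,u(x+e)) - f(x,u(x))⟫ - σ V(x)` stays nonpositive,
then `⟪∇V(x(t)), f(x(t), u(x(t)+e(t)))⟫ ≤ -(1-σ) V(x(t))` and
`V(x(t)) ≤ V(x(t_k)) exp(-(1-σ)(t-t_k))`. -/
theorem stmt_1 {d m : ℕ}
    (f : EuclideanSpace ℝ (Fin d) → EuclideanSpace ℝ (Fin m) → EuclideanSpace ℝ (Fin d))
    (u : EuclideanSpace ℝ (Fin d) → EuclideanSpace ℝ (Fin m))
    (V : EuclideanSpace ℝ (Fin d) → ℝ) (hV : ContDiff ℝ 1 V) (hVnn : ∀ y, 0 ≤ V y)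
    (σ : ℝ) (hσ : 0 < σ) (hσ1 : σ < 1)
    (hfb : ∀ y, (inner ℝ (gradient V y) (f y (u y)) : ℝ) ≤ -V y)
    (tk tk1 : ℝ) (htk : tk < tk1)
    (x e : ℝ → EuclideanSpace ℝ (Fin d))
    (hetk : e tk = 0)
    (he : ∀ t ∈ Ico tk tk1, e t = x tk - x t)
    (hxode : ∀ t ∈ Ico tk tk1, HasDerivAt x (f (x t) (u (x t + e t))) t)
    (hevent : ∀ t ∈ Ico tk tk1,
      (inner ℝ (gradient V (x t)) (f (x t) (u (x t + e t)) - f (x t) (u (x t))) : ℝ)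
        - σ * V (x t) ≤ 0) :
    ∀ t ∈ Ico tk tk1,
      (inner ℝ (gradient V (x t)) (f (x t) (u (x t + e t))) : ℝ) ≤ -(1 - σ) * V (x t) ∧
      V (x t) ≤ V (x tk) * Real.exp (-(1 - σ) * (t - tk)) :=
  stmt_1_general f u V hV σ hfb tk tk1 x e hxode hevent
end

section
/- Suppose ‖f(x, u(x+e))‖ ≤ l_f‖x‖ + l_f l_u(‖x‖ + ‖e‖) for all x ≠ 0 and e, where l_f, l_u > 0. If ẋ = f(x, u(x+e)) and ė = -ẋ, then z = ‖e‖/‖x‖ satisfies ż ≤ (l_f(1 + l_u) + l_f l_u z)(1 + z) wherever x ≠ 0. -/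
/-!
The norm is 1-Lipschitz, so the derivative of `‖x‖` or `‖e‖`, wherever it exists, is bounded in
absolute value by `‖f‖`. Writing `‖e‖ = z ‖x‖` near `t` and differentiating gives
`ż ‖x‖ ≤ ‖f‖ (1 + z)`, and the growth bound on `f` turns `‖f‖ / ‖x‖` into
`l_f (1 + l_u) + l_f l_u z`.
-/

theorem abs_le_norm_of_hasDerivAt_norm {E : Type*} [NormedAddCommGroup E] [NormedSpace ℝ E]
    {g : ℝ → E} {g' : E} {D t : ℝ} (hg : HasDerivAt g g' t)
    (hD : HasDerivAt (fun s => ‖g s‖) D t) : |D| ≤ ‖g'‖ := by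
  have hslope : ∀ s, |slope (fun s => ‖g s‖) t s| ≤ ‖slope g t s‖ := fun s => by
    simp only [slope_def_module, smul_eq_mul, abs_mul, norm_smul, Real.norm_eq_abs]
    gcongr
    exact abs_norm_sub_norm_le _ _
  exact le_of_tendsto_of_tendsto' (continuous_abs.continuousAt.tendsto.comp hD.tendsto_slope)
    hg.tendsto_slope.norm hslope

theorem hasDerivAt_of_hasDerivAt_div {a b : ℝ → ℝ} {Da zd t : ℝ} (ha : HasDerivAt a Da t)
    (ht : a t ≠ 0) (hz : HasDerivAt (fun s => b s / a s) zd t) :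
    HasDerivAt b (zd * a t + b t / a t * Da) t := by
  refine (hz.mul ha).congr_of_eventuallyEq ?_
  filter_upwards [ha.continuousAt.eventually_ne ht] with s hs
  exact (div_mul_cancel₀ (b s) hs).symm

theorem le_of_hasDerivAt_norm_div_norm {E : Type*} [NormedAddCommGroup E] [InnerProductSpace ℝ E]
    {g h : ℝ → E} {g' h' : E} {t zd : ℝ} (hg : HasDerivAt g g' t) (hh : HasDerivAt h h' t)
    (h0 : h t ≠ 0) (hz : HasDerivAt (fun s => ‖g s‖ / ‖h s‖) zd t) :
    zd ≤ (‖g'‖ + ‖g t‖ / ‖h t‖ * ‖h'‖) / ‖h t‖ := by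
  have hpos : 0 < ‖h t‖ := norm_pos_iff.mpr h0
  have hnorm_h := (hh.differentiableAt.norm ℝ h0).hasDerivAt
  have hnorm_g := hasDerivAt_of_hasDerivAt_div hnorm_h hpos.ne' hz
  have hg_bound := abs_le_norm_of_hasDerivAt_norm hg hnorm_g
  have hh_bound := abs_le_norm_of_hasDerivAt_norm hh hnorm_h
  have hz0 : 0 ≤ ‖g t‖ / ‖h t‖ := by positivity
  rw [le_div_iff₀ hpos]
  nlinarith [abs_le.mp hg_bound, abs_le.mp hh_bound]

theorem stmt_3_general {d m : ℕ}
    (f : EuclideanSpace ℝ (Fin d) → EuclideanSpace ℝ (Fin m) → EuclideanSpace ℝ (Fin d))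
    (u : EuclideanSpace ℝ (Fin d) → EuclideanSpace ℝ (Fin m))
    (lf lu : ℝ)
    (hbound : ∀ (y : EuclideanSpace ℝ (Fin d)), y ≠ 0 → ∀ (w : EuclideanSpace ℝ (Fin d)),
      ‖f y (u (y + w))‖ ≤ lf * ‖y‖ + lf * lu * (‖y‖ + ‖w‖))
    (x e : ℝ → EuclideanSpace ℝ (Fin d))
    (hx : ∀ t, HasDerivAt x (f (x t) (u (x t + e t))) t)
    (he : ∀ t, HasDerivAt e (-(f (x t) (u (x t + e t)))) t)
    (t : ℝ) (hxt : x t ≠ 0)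
    (zd : ℝ) (hz : HasDerivAt (fun s => ‖e s‖ / ‖x s‖) zd t) :
    zd ≤ (lf * (1 + lu) + lf * lu * (‖e t‖ / ‖x t‖)) * (1 + ‖e t‖ / ‖x t‖) := by
  have hpos : 0 < ‖x t‖ := norm_pos_iff.mpr hxt
  have hzd := le_of_hasDerivAt_norm_div_norm (he t) (hx t) hxt hz
  set F := f (x t) (u (x t + e t))
  rw [norm_neg] at hzd
  have hgrowth : ‖F‖ / ‖x t‖ ≤ lf * (1 + lu) + lf * lu * (‖e t‖ / ‖x t‖) := by
    rw [div_le_iff₀ hpos, add_mul, mul_assoc (lf * lu), div_mul_cancel₀ _ hpos.ne']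
    linarith [hbound (x t) hxt (e t)]
  calc zd ≤ ‖F‖ / ‖x t‖ * (1 + ‖e t‖ / ‖x t‖) := hzd.trans_eq (by ring)
    _ ≤ _ := by gcongr

/-- If `‖f(x, u(x+e))‖ ≤ l_f‖x‖ + l_f l_u (‖x‖+‖e‖)`, `ẋ = f(x,u(x+e))` and `ė = -ẋ`,
then `z = ‖e‖/‖x‖` satisfies `ż ≤ (l_f(1+l_u) + l_f l_u z)(1+z)` wherever `x ≠ 0`. -/
theorem stmt_3 {d m : ℕ}
    (f : EuclideanSpace ℝ (Fin d) → EuclideanSpace ℝ (Fin m) → EuclideanSpace ℝ (Fin d))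
    (u : EuclideanSpace ℝ (Fin d) → EuclideanSpace ℝ (Fin m))
    (lf lu : ℝ) (hlf : 0 < lf) (hlu : 0 < lu)
    (hbound : ∀ (y : EuclideanSpace ℝ (Fin d)), y ≠ 0 → ∀ (w : EuclideanSpace ℝ (Fin d)),
      ‖f y (u (y + w))‖ ≤ lf * ‖y‖ + lf * lu * (‖y‖ + ‖w‖))
    (x e : ℝ → EuclideanSpace ℝ (Fin d))
    (hx : ∀ t, HasDerivAt x (f (x t) (u (x t + e t))) t)
    (he : ∀ t, HasDerivAt e (-(f (x t) (u (x t + e t)))) t)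
    (t : ℝ) (hxt : x t ≠ 0) (het : e t ≠ 0)
    (zd : ℝ) (hz : HasDerivAt (fun s => ‖e s‖ / ‖x s‖) zd t) :
    zd ≤ (lf * (1 + lu) + lf * lu * (‖e t‖ / ‖x t‖)) * (1 + ‖e t‖ / ‖x t‖) :=
  stmt_3_general f u lf lu hbound x e hx he t hxt zd hz
end

section
/- Consider the event-triggered controlled system ẋ = f(x, u(x(t_k))) on [t_k, t_{k+1}) with error e(t) = x(t_k) - x(t). Assume (i) ‖f(x',u') - f(x,u)‖ ≤ l_f(‖x'-x‖ + ‖u'-u‖), (ii) ‖u(x') - u(x)‖ ≤ l_u‖x'-x‖, (iii) there exist class-K functions α, γ with α⁻¹(γ(s)) ≤ P·s for all s ≥ 0. Then under the triggering rule defined by the event function h = α(‖x‖) - γ(‖e‖) (events triggered when h = 0 starting from e = 0), the inter-event times t_{k+1} - t_k are bounded below by τ_h = (1/l_f) · log((P+1)/(P + l_u/(1+l_u))). -/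
open Real Set Filter Topology

/-! With `z = ‖e‖ / ‖x‖`, the Lipschitz bounds give `ż ≤ l_f ((1 + l_u) + l_u z)(1 + z)` for the
right Dini derivative. The Möbius substitution `w = (1 + z) / ((1 + l_u) + l_u z)`, of determinant
`1`, turns this Riccati inequality into the linear one `ẇ ≤ l_f w`, so Grönwall gives
`w ≤ exp (l_f (t - t_k)) / (1 + l_u)`. At the event `‖x‖ ≤ P ‖e‖`, i.e. `z ≥ 1 / P`, so
`w ≥ (P + 1) / ((1 + l_u) P + l_u)`; comparing the two bounds gives `τ_h`. -/

/-- A class-K function: continuous, strictly increasing on `[0,∞)`, vanishing at `0`. -/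
def IsClassK (α : ℝ → ℝ) : Prop :=
  ContinuousOn α (Ici 0) ∧ StrictMonoOn α (Ici 0) ∧ α 0 = 0

section LinearizedRatio

variable {E : Type*} [NormedAddCommGroup E]

-- `(1 + z) / ((1 + μ) + μ z)` for `z = ‖c - y‖ / ‖y‖`, in a form that stays defined at `y = 0`.
noncomputable def linearizedRatio (μ : ℝ) (c y : E) : ℝ :=
  (‖y‖ + ‖c - y‖) / ((1 + μ) * ‖y‖ + μ * ‖c - y‖)

lemma linearizedRatio_denom_pos {μ : ℝ} (hμ : 0 < μ) {c : E} (hc : c ≠ 0) (y : E) :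
    0 < (1 + μ) * ‖y‖ + μ * ‖c - y‖ := by
  have hc' : ‖c‖ ≤ ‖y‖ + ‖c - y‖ := norm_le_insert' c y
  nlinarith [norm_pos_iff.2 hc, norm_nonneg y]

lemma linearizedRatio_sub_le {μ : ℝ} {a b c : E}
    (ha : 0 < (1 + μ) * ‖a‖ + μ * ‖c - a‖) (hb : 0 < (1 + μ) * ‖b‖ + μ * ‖c - b‖) :
    linearizedRatio μ c b - linearizedRatio μ c a ≤ ‖b - a‖ * (‖a‖ + ‖c - a‖) /
      (((1 + μ) * ‖b‖ + μ * ‖c - b‖) * ((1 + μ) * ‖a‖ + μ * ‖c - a‖)) := by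
  have hcb : ‖c - b‖ ≤ ‖c - a‖ + ‖b - a‖ := by
    simpa [norm_sub_rev b a] using norm_sub_le_norm_sub_add_norm_sub c a b
  have hab : ‖a‖ ≤ ‖b‖ + ‖b - a‖ := by simpa [norm_sub_rev] using norm_le_insert' a b
  have key : ‖c - b‖ * ‖a‖ - ‖b‖ * ‖c - a‖ ≤ ‖b - a‖ * (‖a‖ + ‖c - a‖) := by
    nlinarith [mul_le_mul_of_nonneg_right hcb (norm_nonneg a),
      mul_le_mul_of_nonneg_right hab (norm_nonneg (c - a))]
  rw [linearizedRatio, linearizedRatio, div_sub_div _ _ hb.ne' ha.ne']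
  gcongr
  -- the terms in `μ` cancel: the numerator is exactly `‖c - b‖ * ‖a‖ - ‖b‖ * ‖c - a‖`
  linear_combination key

lemma div_le_linearizedRatio {μ P : ℝ} (hμ : 0 ≤ μ) (hP : 0 < P) {c y : E}
    (hN : 0 < (1 + μ) * ‖y‖ + μ * ‖c - y‖) (hy : ‖y‖ ≤ P * ‖c - y‖) :
    (P + 1) / ((1 + μ) * P + μ) ≤ linearizedRatio μ c y := by
  rw [linearizedRatio, div_le_div_iff₀ (by positivity) hN]
  nlinarith

variable [NormedSpace ℝ E]

lemma eventually_slope_linearizedRatio_lt {μ r t : ℝ} {c v : E} {x : ℝ → E}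
    (hμ : 0 < μ) (hc : c ≠ 0) (hx : HasDerivWithinAt x v (Ici t) t)
    (hr : ‖v‖ * (‖x t‖ + ‖c - x t‖) / ((1 + μ) * ‖x t‖ + μ * ‖c - x t‖) ^ 2 < r) :
    ∀ᶠ s in 𝓝[>] t, slope (fun s ↦ linearizedRatio μ c (x s)) t s < r := by
  set N : E → ℝ := fun y ↦ (1 + μ) * ‖y‖ + μ * ‖c - y‖
  have hN : ∀ y, 0 < N y := linearizedRatio_denom_pos hμ hc
  have hxs : Tendsto x (𝓝[>] t) (𝓝 (x t)) :=
    hx.continuousWithinAt.tendsto.mono_left (nhdsWithin_mono _ Ioi_subset_Ici_self)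
  have hv : Tendsto (slope x t) (𝓝[>] t) (𝓝 v) :=
    (hasDerivWithinAt_iff_tendsto_slope.1 hx).mono_left
      (nhdsWithin_mono _ fun s (hs : t < s) ↦ ⟨hs.le, hs.ne'⟩)
  have hNs : Tendsto (fun s ↦ N (x s)) (𝓝[>] t) (𝓝 (N (x t))) :=
    (hxs.norm.const_mul _).add ((tendsto_const_nhds.sub hxs).norm.const_mul _)
  have hmaj : Tendsto (fun s ↦ ‖slope x t s‖ * (‖x t‖ + ‖c - x t‖) / (N (x s) * N (x t)))
      (𝓝[>] t) (𝓝 (‖v‖ * (‖x t‖ + ‖c - x t‖) / (N (x t) * N (x t)))) :=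
    (hv.norm.mul_const _).div (hNs.mul_const _) (mul_pos (hN _) (hN _)).ne'
  rw [← sq] at hmaj
  filter_upwards [hmaj.eventually_lt_const hr, self_mem_nhdsWithin] with s hs hts
  have hst : 0 < s - t := sub_pos.2 hts
  refine lt_of_le_of_lt ?_ hs
  have hslope : ‖slope x t s‖ = ‖x s - x t‖ / (s - t) := by
    rw [slope_def_module, norm_smul, norm_inv, Real.norm_of_nonneg hst.le, inv_mul_eq_div]
  rw [slope_def_field, div_le_iff₀ hst, hslope]
  calc _ ≤ ‖x s - x t‖ * (‖x t‖ + ‖c - x t‖) / (N (x s) * N (x t)) :=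
        linearizedRatio_sub_le (hN _) (hN _)
    _ = _ := by field_simp

theorem linearizedRatio_le_of_norm_deriv_le {μ l a b : ℝ} {x v : ℝ → E}
    (hμ : 0 < μ) (hxa : x a ≠ 0) (hx : ContinuousOn x (Icc a b))
    (hx' : ∀ t ∈ Ico a b, HasDerivWithinAt x (v t) (Ici t) t)
    (hv : ∀ t ∈ Ico a b, ‖v t‖ ≤ l * ((1 + μ) * ‖x t‖ + μ * ‖x a - x t‖)) :
    ∀ t ∈ Icc a b, linearizedRatio μ (x a) (x t) ≤ exp (l * (t - a)) / (1 + μ) := by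
  have hN := linearizedRatio_denom_pos hμ hxa
  have hcont : ContinuousOn (fun t ↦ linearizedRatio μ (x a) (x t)) (Icc a b) :=
    (hx.norm.add (continuousOn_const.sub hx).norm).div
      ((hx.norm.const_mul _).add ((continuousOn_const.sub hx).norm.const_mul _))
      fun t _ ↦ (hN (x t)).ne'
  have hdini : ∀ t ∈ Ico a b, ∀ r, l * linearizedRatio μ (x a) (x t) < r →
      ∃ᶠ s in 𝓝[>] t, slope (fun s ↦ linearizedRatio μ (x a) (x s)) t s < r := by
    intro t ht r hr
    refine (eventually_slope_linearizedRatio_lt hμ hxa (hx' t ht) (lt_of_le_of_lt ?_ hr)).frequently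
    have hM : 0 ≤ ‖x t‖ + ‖x a - x t‖ := by positivity
    calc _ ≤ l * ((1 + μ) * ‖x t‖ + μ * ‖x a - x t‖) * (‖x t‖ + ‖x a - x t‖) /
          ((1 + μ) * ‖x t‖ + μ * ‖x a - x t‖) ^ 2 := by gcongr; exact hv t ht
      _ = _ := by rw [linearizedRatio]; field_simp
  have hinit : linearizedRatio μ (x a) (x a) ≤ 1 / (1 + μ) := by
    rw [linearizedRatio, sub_self, norm_zero, mul_zero, add_zero, add_zero,
      div_mul_cancel_right₀ (norm_ne_zero_iff.2 hxa), one_div]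
  intro t ht
  simpa [gronwallBound_ε0, div_eq_inv_mul] using
    le_gronwallBound_of_liminf_deriv_right_le (K := l) (ε := 0) hcont hdini hinit
      (fun _ _ ↦ by simp) t ht

end LinearizedRatio

lemma norm_sampled_feedback_le {E F : Type*} [SeminormedAddCommGroup E] [SeminormedAddCommGroup F]
    {f : E → F → E} {u : E → F} {lf lu : ℝ} (hlf : 0 ≤ lf) (hlu : 0 ≤ lu)
    (hfLip : ∀ y y' v v', ‖f y' v' - f y v‖ ≤ lf * (‖y' - y‖ + ‖v' - v‖))
    (huLip : ∀ y y', ‖u y' - u y‖ ≤ lu * ‖y' - y‖) (hf0 : f 0 (u 0) = 0) (y₀ y : E) :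
    ‖f y (u y₀)‖ ≤ lf * ((1 + lu) * ‖y‖ + lu * ‖y₀ - y‖) := by
  have hf := hfLip 0 y (u 0) (u y₀)
  have hu := huLip 0 y₀
  rw [hf0, sub_zero, sub_zero] at hf
  rw [sub_zero] at hu
  have hy₀ : ‖y₀‖ ≤ ‖y‖ + ‖y₀ - y‖ := norm_le_insert' y₀ y
  calc ‖f y (u y₀)‖ ≤ lf * (‖y‖ + ‖u y₀ - u 0‖) := hf
    _ ≤ lf * (‖y‖ + lu * (‖y‖ + ‖y₀ - y‖)) := by gcongr; exact hu.trans (by gcongr)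
    _ = lf * ((1 + lu) * ‖y‖ + lu * ‖y₀ - y‖) := by ring

theorem stmt_6_general {d m : ℕ}
    (f : EuclideanSpace ℝ (Fin d) → EuclideanSpace ℝ (Fin m) → EuclideanSpace ℝ (Fin d))
    (u : EuclideanSpace ℝ (Fin d) → EuclideanSpace ℝ (Fin m))
    (lf lu P : ℝ) (hlf : 0 < lf) (hlu : 0 < lu) (hP : 0 < P)
    (hfLip : ∀ y y' v v', ‖f y' v' - f y v‖ ≤ lf * (‖y' - y‖ + ‖v' - v‖))
    (huLip : ∀ y y', ‖u y' - u y‖ ≤ lu * ‖y' - y‖)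
    (hf0 : f 0 (u 0) = 0)
    (α γ : ℝ → ℝ) (hα : IsClassK α)
    (hcomp : ∀ s : ℝ, 0 ≤ s → γ s ≤ α (P * s))
    (tk tk1 : ℝ) (htk : tk < tk1)
    (x : ℝ → EuclideanSpace ℝ (Fin d)) (hxtk : x tk ≠ 0)
    (hxode : ∀ t ∈ Icc tk tk1, HasDerivAt x (f (x t) (u (x tk))) t)
    -- the event is triggered at `tk1`, i.e. `h = 0`
    (htrig : γ ‖x tk - x tk1‖ = α ‖x tk1‖) :
    (1 / lf) * Real.log ((P + 1) / (P + lu / (1 + lu))) ≤ tk1 - tk := by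
  have hevent : ‖x tk1‖ ≤ P * ‖x tk - x tk1‖ :=
    (hα.2.1.le_iff_le (norm_nonneg _) (mul_nonneg hP.le (norm_nonneg _))).1
      (htrig ▸ hcomp _ (norm_nonneg _))
  have hupper := linearizedRatio_le_of_norm_deriv_le hlu hxtk
    (fun t ht ↦ (hxode t ht).continuousAt.continuousWithinAt)
    (fun t ht ↦ (hxode t (Ico_subset_Icc_self ht)).hasDerivWithinAt)
    (fun t _ ↦ norm_sampled_feedback_le hlf.le hlu.le hfLip huLip hf0 (x tk) (x t))
    tk1 (right_mem_Icc.2 htk.le)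
  have hlower := div_le_linearizedRatio hlu.le hP (linearizedRatio_denom_pos hlu hxtk _) hevent
  have hR : (P + 1) / (P + lu / (1 + lu)) ≤ exp (lf * (tk1 - tk)) :=
    calc (P + 1) / (P + lu / (1 + lu)) = (1 + lu) * ((P + 1) / ((1 + lu) * P + lu)) := by
          field_simp
      _ ≤ (1 + lu) * (exp (lf * (tk1 - tk)) / (1 + lu)) :=
          mul_le_mul_of_nonneg_left (hlower.trans hupper) (by positivity)
      _ = exp (lf * (tk1 - tk)) := by field_simp
  rwa [one_div, inv_mul_le_iff₀ hlf, log_le_iff_le_exp (by positivity)]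

/-- Lower bound on the inter-event time for the event function
`h = α(‖x‖) - γ(‖e‖)`: under joint Lipschitzness of `f` (constant `l_f`),
Lipschitzness of `u` (constant `l_u`), and `α⁻¹∘γ ≤ P·id`, the inter-event
time is at least `τ_h = (1/l_f) log((P+1)/(P + l_u/(1+l_u)))`. -/
theorem stmt_6 {d m : ℕ}
    (f : EuclideanSpace ℝ (Fin d) → EuclideanSpace ℝ (Fin m) → EuclideanSpace ℝ (Fin d))
    (u : EuclideanSpace ℝ (Fin d) → EuclideanSpace ℝ (Fin m))
    (lf lu P : ℝ) (hlf : 0 < lf) (hlu : 0 < lu) (hP : 0 < P)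
    (hfLip : ∀ y y' v v', ‖f y' v' - f y v‖ ≤ lf * (‖y' - y‖ + ‖v' - v‖))
    (huLip : ∀ y y', ‖u y' - u y‖ ≤ lu * ‖y' - y‖)
    (hf0 : f 0 (u 0) = 0) (hu0 : u 0 = 0)
    (α γ : ℝ → ℝ) (hα : IsClassK α) (hγ : IsClassK γ)
    (hcomp : ∀ s : ℝ, 0 ≤ s → γ s ≤ α (P * s))
    (tk tk1 : ℝ) (htk : tk < tk1)
    (x : ℝ → EuclideanSpace ℝ (Fin d)) (hxtk : x tk ≠ 0)
    (hxode : ∀ t ∈ Icc tk tk1, HasDerivAt x (f (x t) (u (x tk))) t)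
    -- before the event, `h = α(‖x‖) - γ(‖e‖) > 0`
    (hpre : ∀ t ∈ Ico tk tk1, γ ‖x tk - x t‖ < α ‖x t‖)
    -- the event is triggered at `tk1`, i.e. `h = 0`
    (htrig : γ ‖x tk - x tk1‖ = α ‖x tk1‖) :
    (1 / lf) * Real.log ((P + 1) / (P + lu / (1 + lu))) ≤ tk1 - tk :=
  stmt_6_general f u lf lu P hlf hlu hP hfLip huLip hf0 α γ hα hcomp tk tk1 htk x hxtk hxode htrig
end

section
/- Under the hypotheses of the inter-event-time theorem, if additionally the state space D is bounded, V is continuously differentiable on D, and ∇V(x)·(f(x, u(x+e)) - f(x, u(x))) ≤ γ(‖e‖) holds for all x ∈ D and all e (equation group condition), then the Lipschitz constant of α⁻¹∘γ is bounded by c·l_{α⁻¹}·l_u where c = max_{x∈D}‖∇V(x)‖·l_f, and consequently the minimal inter-event time for the event function h̃ = ∇V·(f(x,u(x+e)) - f(x,u(x))) - α(‖x‖) is bounded below by τ_{h̃} = (1/l_f)·log((c l_{α⁻¹} l_u + 1)/(c l_{α⁻¹} l_u + l_u/(1+l_u))). -/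
/-!
The gain bound is the linear lower bound `s ≤ α (l_{α⁻¹} s)`, which the Lipschitz inverse gives
together with `α 0 = 0`.

For the inter-event time, track `ρ = ‖e‖ / (‖e‖ + ‖x‖)` with `e = x(t_k) - x(t)`. It vanishes at
`t_k`, and `‖ẋ‖ ≤ l_f (‖x‖ + l_u ‖x(t_k)‖) ≤ l_f (1 + l_u - ρ) (‖e‖ + ‖x‖)` bounds its right
Dini derivative by `l_f (1 + l_u - ρ)`, so Grönwall gives
`ρ(t) ≤ (1 + l_u)(1 - e^{-l_f (t - t_k)})`.
At the event, `α ‖x‖ ≤ γ ‖e‖ ≤ α (c l_{α⁻¹} l_u ‖e‖)` forces `ρ ≥ 1 / (1 + c l_{α⁻¹} l_u)`, and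
solving for `t` gives `τ`.
-/

open Real Set Filter Topology

namespace IsClassK

variable {α : ℝ → ℝ}

theorem nonneg (hα : IsClassK α) {s : ℝ} (hs : 0 ≤ s) : 0 ≤ α s :=
  hα.2.2 ▸ hα.2.1.monotoneOn self_mem_Ici hs hs

theorem le_of_apply_le (hα : IsClassK α) {s t : ℝ} (hs : 0 ≤ s) (ht : 0 ≤ t) (h : α s ≤ α t) :
    s ≤ t :=
  (hα.2.1.le_iff_le hs ht).1 h

theorem le_apply_mul (hα : IsClassK α) {L : ℝ} (hL : 0 < L)
    (hinv : ∀ s₁ s₂ : ℝ, 0 ≤ s₁ → 0 ≤ s₂ → |s₁ - s₂| ≤ L * |α s₁ - α s₂|)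
    {s : ℝ} (hs : 0 ≤ s) : s ≤ α (L * s) := by
  have hLs : 0 ≤ L * s := by positivity
  have h := hinv (L * s) 0 hLs le_rfl
  rw [hα.2.2, sub_zero, sub_zero, abs_of_nonneg hLs, abs_of_nonneg (hα.nonneg hLs)] at h
  exact le_of_mul_le_mul_left h hL

end IsClassK

section

variable {E : Type*} [NormedAddCommGroup E]

noncomputable def errorRatio (x₀ y : E) : ℝ := ‖x₀ - y‖ / (‖x₀ - y‖ + ‖y‖)

theorem norm_sub_add_norm_pos {x₀ : E} (hx₀ : x₀ ≠ 0) (y : E) : 0 < ‖x₀ - y‖ + ‖y‖ :=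
  (norm_pos_iff.2 hx₀).trans_le (norm_le_norm_sub_add x₀ y)

theorem continuous_errorRatio {x₀ : E} (hx₀ : x₀ ≠ 0) : Continuous (errorRatio x₀) :=
  Continuous.div (by fun_prop) (by fun_prop) fun y => (norm_sub_add_norm_pos hx₀ y).ne'

-- `ρ` need not be differentiable along a trajectory; its growth is read off this increment bound.
theorem errorRatio_sub_le {x₀ : E} (hx₀ : x₀ ≠ 0) (y y' : E) :
    errorRatio x₀ y' - errorRatio x₀ y ≤ ‖y' - y‖ * (‖x₀ - y'‖ + ‖y'‖)⁻¹ := by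
  have hA : ‖x₀ - y'‖ ≤ ‖x₀ - y‖ + ‖y' - y‖ := by
    simpa [norm_sub_rev y'] using norm_sub_le_norm_sub_add_norm_sub x₀ y y'
  have hB : ‖y‖ - ‖y' - y‖ ≤ ‖y'‖ := by
    linarith [norm_sub_norm_le y y', norm_sub_rev y y']
  have h := norm_sub_add_norm_pos hx₀ y
  have h' := norm_sub_add_norm_pos hx₀ y'
  rw [errorRatio, errorRatio, div_sub_div _ _ h'.ne' h.ne', div_le_iff₀ (by positivity)]
  field_simp
  nlinarith [norm_nonneg (x₀ - y), norm_nonneg y, norm_nonneg (y' - y)]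

theorem inv_one_add_le_errorRatio {x₀ y : E} {a : ℝ} (ha : 0 ≤ a) (hx₀ : x₀ ≠ 0)
    (h : ‖y‖ ≤ a * ‖x₀ - y‖) : (1 + a)⁻¹ ≤ errorRatio x₀ y := by
  have hpos := norm_sub_add_norm_pos hx₀ y
  rw [errorRatio, inv_eq_one_div, div_le_div_iff₀ (by positivity) hpos]
  linarith

theorem norm_add_mul_norm_le_errorRatio {x₀ : E} (hx₀ : x₀ ≠ 0) (y : E) {l : ℝ} (hl : 0 ≤ l) :
    ‖y‖ + l * ‖x₀‖ ≤ (1 + l - errorRatio x₀ y) * (‖x₀ - y‖ + ‖y‖) := by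
  have hpos := norm_sub_add_norm_pos hx₀ y
  rw [sub_mul, errorRatio, div_mul_cancel₀ _ hpos.ne']
  nlinarith [norm_le_norm_sub_add x₀ y]

end

section

variable {E : Type*} [NormedAddCommGroup E] [NormedSpace ℝ E]

theorem frequently_slope_lt_of_sub_le {g k : ℝ → ℝ} {x : ℝ → E} {v : E} {t r : ℝ}
    (hx : HasDerivAt x v t) (hk : ContinuousAt k t)
    (hg : ∀ z, g z - g t ≤ ‖x z - x t‖ * k z) (hr : ‖v‖ * k t < r) :
    ∃ᶠ z in 𝓝[>] t, (z - t)⁻¹ * (g z - g t) < r := by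
  have hlim : Tendsto (fun z => ‖slope x t z‖ * k z) (𝓝[>] t) (𝓝 (‖v‖ * k t)) :=
    ((hx.tendsto_slope.mono_left (nhdsGT_le_nhdsNE t)).norm).mul
      (hk.tendsto.mono_left nhdsWithin_le_nhds)
  refine Eventually.frequently ?_
  filter_upwards [hlim.eventually (gt_mem_nhds hr), self_mem_nhdsWithin] with z hz hzt
  have hzt : 0 < z - t := sub_pos.2 hzt
  calc (z - t)⁻¹ * (g z - g t) ≤ (z - t)⁻¹ * (‖x z - x t‖ * k z) := by gcongr; exact hg z
    _ = ‖slope x t z‖ * k z := by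
      rw [slope_def_module, norm_smul, norm_inv, Real.norm_of_nonneg hzt.le, mul_assoc]
    _ < r := hz

theorem errorRatio_le_of_norm_deriv_le {x x' : ℝ → E} {a b L l : ℝ} (hL : 0 < L) (hl : 0 ≤ l)
    (hxa : x a ≠ 0)
    (hx : ∀ t ∈ Icc a b, HasDerivAt x (x' t) t)
    (hx' : ∀ t ∈ Ico a b, ‖x' t‖ ≤ L * (‖x t‖ + l * ‖x a‖)) :
    ∀ t ∈ Icc a b, errorRatio (x a) (x t) ≤ (1 + l) * (1 - exp (-(L * (t - a)))) := by
  have hcont : ContinuousOn (fun t => errorRatio (x a) (x t)) (Icc a b) :=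
    (continuous_errorRatio hxa).comp_continuousOn fun t ht =>
      (hx t ht).continuousAt.continuousWithinAt
  have hslope : ∀ t ∈ Ico a b, ∀ r, L * (1 + l - errorRatio (x a) (x t)) < r →
      ∃ᶠ z in 𝓝[>] t, (z - t)⁻¹ * (errorRatio (x a) (x z) - errorRatio (x a) (x t)) < r := by
    intro t ht r hr
    have hpos := norm_sub_add_norm_pos hxa (x t)
    have hxt := hx t (Ico_subset_Icc_self ht)
    have hk : ContinuousAt (fun z => (‖x a - x z‖ + ‖x z‖)⁻¹) t := by
      have := hxt.continuousAt
      exact ((continuousAt_const.sub this).norm.add this.norm).inv₀ hpos.ne'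
    refine frequently_slope_lt_of_sub_le hxt hk (fun z => errorRatio_sub_le hxa (x t) (x z))
      (lt_of_le_of_lt ?_ hr)
    rw [← div_eq_mul_inv, div_le_iff₀ hpos, mul_assoc]
    exact (hx' t ht).trans
      (mul_le_mul_of_nonneg_left (norm_add_mul_norm_le_errorRatio hxa (x t) hl) hL.le)
  intro t ht
  convert le_gronwallBound_of_liminf_deriv_right_le (δ := 0) (K := -L) (ε := L * (1 + l))
    hcont hslope (by simp [errorRatio]) (fun _ _ => le_of_eq (by ring)) t ht using 1
  rw [gronwallBound_of_K_ne_0 (neg_ne_zero.2 hL.ne')]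
  field_simp
  ring

end

theorem norm_apply_le_of_lipschitz {E F : Type*} [NormedAddCommGroup E] [NormedAddCommGroup F]
    {f : E → F → E} {u : E → F} {L l : ℝ} (hL : 0 ≤ L)
    (hf : ∀ y y' v v', ‖f y' v' - f y v‖ ≤ L * (‖y' - y‖ + ‖v' - v‖))
    (hu : ∀ y y', ‖u y' - u y‖ ≤ l * ‖y' - y‖) (h0 : f 0 (u 0) = 0) (y x₀ : E) :
    ‖f y (u x₀)‖ ≤ L * (‖y‖ + l * ‖x₀‖) := by
  have h := hf 0 y (u 0) (u x₀)
  rw [h0, sub_zero, sub_zero] at h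
  exact h.trans (mul_le_mul_of_nonneg_left (by simpa using hu 0 x₀) hL)

theorem log_div_le_of_inv_le_mul_one_sub_exp {a l L T : ℝ} (ha : 0 ≤ a) (hl : 0 < l) (hL : 0 < L)
    (h : (1 + a)⁻¹ ≤ (1 + l) * (1 - exp (-(L * T)))) :
    1 / L * log ((a + 1) / (a + l / (1 + l))) ≤ T := by
  have hq : 0 < (a + 1) / (a + l / (1 + l)) := by positivity
  have hexp : exp (-(L * T)) ≤ ((a + 1) / (a + l / (1 + l)))⁻¹ := by
    rw [inv_eq_one_div, div_le_iff₀ (by positivity)] at h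
    rw [inv_div]
    field_simp
    nlinarith
  rw [← le_log_iff_exp_le (inv_pos.2 hq), log_inv] at hexp
  rw [one_div_mul_eq_div, div_le_iff₀ hL]
  linarith

theorem stmt_7_general {d m : ℕ}
    (D : Set (EuclideanSpace ℝ (Fin d)))
    (f : EuclideanSpace ℝ (Fin d) → EuclideanSpace ℝ (Fin m) → EuclideanSpace ℝ (Fin d))
    (u : EuclideanSpace ℝ (Fin d) → EuclideanSpace ℝ (Fin m))
    (V : EuclideanSpace ℝ (Fin d) → ℝ)
    (lf lu c linv : ℝ) (hlf : 0 < lf) (hlu : 0 < lu) (hlinv : 0 < linv)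
    (hfLip : ∀ y y' v v', ‖f y' v' - f y v‖ ≤ lf * (‖y' - y‖ + ‖v' - v‖))
    (huLip : ∀ y y', ‖u y' - u y‖ ≤ lu * ‖y' - y‖)
    (hf0 : f 0 (u 0) = 0)
    (α γ : ℝ → ℝ) (hα : IsClassK α)
    -- `c` bounds `max_{x∈D} ‖∇V(x)‖ · l_f`
    (hc : ∀ y ∈ D, ‖gradient V y‖ * lf ≤ c)
    -- equation-group condition: `∇V·(f(x,u(x+e)) - f(x,u(x))) ≤ γ(‖e‖)` on `D`
    (hgroup : ∀ y ∈ D, ∀ w : EuclideanSpace ℝ (Fin d),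
      (inner ℝ (gradient V y) (f y (u (y + w)) - f y (u y)) : ℝ) ≤ γ ‖w‖)
    -- `γ` is the tight estimate: its Lipschitz constant is bounded by `c·l_u`
    (hγtight : ∀ s : ℝ, 0 ≤ s → γ s ≤ c * lu * s)
    -- `α⁻¹` is `l_{α⁻¹}`-Lipschitz
    (hinv : ∀ s₁ s₂ : ℝ, 0 ≤ s₁ → 0 ≤ s₂ → |s₁ - s₂| ≤ linv * |α s₁ - α s₂|)
    (tk tk1 : ℝ) (htk : tk < tk1)
    (x : ℝ → EuclideanSpace ℝ (Fin d)) (hxtk : x tk ≠ 0)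
    (hxD : ∀ t ∈ Icc tk tk1, x t ∈ D)
    (hxode : ∀ t ∈ Icc tk tk1, HasDerivAt x (f (x t) (u (x tk))) t)
    -- the event `h̃ = 0` is triggered at `tk1`
    (htrig : (inner ℝ (gradient V (x tk1)) (f (x tk1) (u (x tk)) - f (x tk1) (u (x tk1))) : ℝ)
        = α ‖x tk1‖) :
    (∀ s : ℝ, 0 ≤ s → γ s ≤ α (c * linv * lu * s)) ∧
    (1 / lf) * Real.log ((c * linv * lu + 1) / (c * linv * lu + lu / (1 + lu)))
      ≤ tk1 - tk := by
  have htk1 : tk1 ∈ Icc tk tk1 := ⟨htk.le, le_rfl⟩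
  have hc0 : 0 ≤ c :=
    (by positivity : 0 ≤ ‖gradient V (x tk)‖ * lf).trans (hc _ (hxD tk ⟨le_rfl, htk.le⟩))
  have hgain : ∀ s : ℝ, 0 ≤ s → γ s ≤ α (c * linv * lu * s) := by
    intro s hs
    have h := hα.le_apply_mul hlinv hinv (by positivity : 0 ≤ c * lu * s)
    rw [show linv * (c * lu * s) = c * linv * lu * s by ring] at h
    exact (hγtight s hs).trans h
  refine ⟨hgain, ?_⟩
  have hevent : ‖x tk1‖ ≤ c * linv * lu * ‖x tk - x tk1‖ := by
    have h := hgroup (x tk1) (hxD tk1 htk1) (x tk - x tk1)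
    rw [add_sub_cancel, htrig] at h
    exact hα.le_of_apply_le (norm_nonneg _) (by positivity)
      (h.trans (hgain _ (norm_nonneg _)))
  have hratio := errorRatio_le_of_norm_deriv_le hlf hlu.le hxtk hxode
    (fun t _ => norm_apply_le_of_lipschitz hlf.le hfLip huLip hf0 (x t) (x tk)) tk1 htk1
  exact log_div_le_of_inv_le_mul_one_sub_exp (by positivity) hlu hlf
    ((inv_one_add_le_errorRatio (by positivity) hxtk hevent).trans hratio)

/-- On a bounded state space, with `c = max_{x∈D}‖∇V(x)‖·l_f` and `α⁻¹`
Lipschitz with constant `l_{α⁻¹}`, the Lipschitz-type gain of `α⁻¹∘γ` is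
bounded by `c·l_{α⁻¹}·l_u`, and the minimal inter-event time for the event
function `h̃ = ∇V·(f(x,u(x+e)) - f(x,u(x))) - α(‖x‖)` is bounded below by
`τ = (1/l_f) log((c l_{α⁻¹} l_u + 1)/(c l_{α⁻¹} l_u + l_u/(1+l_u)))`. -/
theorem stmt_7 {d m : ℕ}
    (D : Set (EuclideanSpace ℝ (Fin d))) (hDb : Bornology.IsBounded D)
    (f : EuclideanSpace ℝ (Fin d) → EuclideanSpace ℝ (Fin m) → EuclideanSpace ℝ (Fin d))
    (u : EuclideanSpace ℝ (Fin d) → EuclideanSpace ℝ (Fin m))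
    (V : EuclideanSpace ℝ (Fin d) → ℝ) (hV : ContDiff ℝ 1 V)
    (lf lu c linv : ℝ) (hlf : 0 < lf) (hlu : 0 < lu) (hlinv : 0 < linv)
    (hfLip : ∀ y y' v v', ‖f y' v' - f y v‖ ≤ lf * (‖y' - y‖ + ‖v' - v‖))
    (huLip : ∀ y y', ‖u y' - u y‖ ≤ lu * ‖y' - y‖)
    (hf0 : f 0 (u 0) = 0) (hu0 : u 0 = 0)
    (α γ : ℝ → ℝ) (hα : IsClassK α) (hγ : IsClassK γ)
    -- `c` bounds `max_{x∈D} ‖∇V(x)‖ · l_f`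
    (hc : ∀ y ∈ D, ‖gradient V y‖ * lf ≤ c)
    -- equation-group condition: `∇V·(f(x,u(x+e)) - f(x,u(x))) ≤ γ(‖e‖)` on `D`
    (hgroup : ∀ y ∈ D, ∀ w : EuclideanSpace ℝ (Fin d),
      (inner ℝ (gradient V y) (f y (u (y + w)) - f y (u y)) : ℝ) ≤ γ ‖w‖)
    -- `γ` is the tight estimate: its Lipschitz constant is bounded by `c·l_u`
    (hγtight : ∀ s : ℝ, 0 ≤ s → γ s ≤ c * lu * s)
    -- `α⁻¹` is `l_{α⁻¹}`-Lipschitz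
    (hinv : ∀ s₁ s₂ : ℝ, 0 ≤ s₁ → 0 ≤ s₂ → |s₁ - s₂| ≤ linv * |α s₁ - α s₂|)
    (tk tk1 : ℝ) (htk : tk < tk1)
    (x : ℝ → EuclideanSpace ℝ (Fin d)) (hxtk : x tk ≠ 0)
    (hxD : ∀ t ∈ Icc tk tk1, x t ∈ D)
    (hxode : ∀ t ∈ Icc tk tk1, HasDerivAt x (f (x t) (u (x tk))) t)
    -- before the event, `h̃ < 0`
    (hpre : ∀ t ∈ Ico tk tk1,
      (inner ℝ (gradient V (x t)) (f (x t) (u (x tk)) - f (x t) (u (x t))) : ℝ) < α ‖x t‖)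
    -- the event `h̃ = 0` is triggered at `tk1`
    (htrig : (inner ℝ (gradient V (x tk1)) (f (x tk1) (u (x tk)) - f (x tk1) (u (x tk1))) : ℝ)
        = α ‖x tk1‖) :
    (∀ s : ℝ, 0 ≤ s → γ s ≤ α (c * linv * lu * s)) ∧
    (1 / lf) * Real.log ((c * linv * lu + 1) / (c * linv * lu + lu / (1 + lu)))
      ≤ tk1 - tk :=
  stmt_7_general D f u V lf lu c linv hlf hlu hlinv hfLip huLip hf0 α γ hα hc hgroup hγtight hinv tk
    tk1 htk x hxtk hxD hxode htrig
end

section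
/- Let x(t) solve ẋ = f(x, u(x(t_k))) on [t_k, t_{k+1}) where ‖f(x,u)‖ ≤ l_f(‖x‖ + ‖u‖), u is l_u-Lipschitz with u(0) = 0, and f(0, 0) = 0. Then the error e(t) = x(t_k) - x(t) satisfies ‖e(t)‖ ≤ (1 + l_u)l_f · ∫_{t_k}^{t} (‖x(s)‖ + ‖e(s)‖) ds for t ∈ [t_k, t_{k+1}), and hence by Grönwall's inequality ‖e(t)‖ ≤ ‖x(t_k)‖(e^{(1+l_u)l_f(t - t_k)} - 1). -/
open Set Real intervalIntegral

/-!
Along the flow the control is frozen at `u (x t_k)`, so the vector field is bounded by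
`l_f (‖x‖ + l_u ‖x(t_k)‖)`. Bounding `‖x(t_k)‖` by `‖x‖ + ‖e‖` gives the integral inequality for
`e`; bounding `‖x‖` by `‖x(t_k)‖ + ‖e‖` instead gives `‖ė‖ ≤ K ‖e‖ + K ‖x(t_k)‖` with
`K = (1 + l_u) l_f`, and Grönwall's inequality with `e(t_k) = 0` gives the exponential bound.
-/

section HeldControl

variable {E F : Type*} [NormedAddCommGroup E] [NormedAddCommGroup F]
  {f : E → F → E} {u : E → F} {lf lu : ℝ}

theorem norm_apply_held_control_le (hlf : 0 ≤ lf)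
    (hfb : ∀ y v, ‖f y v‖ ≤ lf * (‖y‖ + ‖v‖))
    (huLip : ∀ y y', ‖u y' - u y‖ ≤ lu * ‖y' - y‖) (hu0 : u 0 = 0) (y z : E) :
    ‖f y (u z)‖ ≤ lf * (‖y‖ + lu * ‖z‖) := by
  have hu : ‖u z‖ ≤ lu * ‖z‖ := by simpa [hu0] using huLip 0 z
  calc ‖f y (u z)‖ ≤ lf * (‖y‖ + ‖u z‖) := hfb y (u z)
    _ ≤ lf * (‖y‖ + lu * ‖z‖) := by gcongr

theorem norm_apply_held_control_le_state_add_error (hlf : 0 ≤ lf) (hlu : 0 ≤ lu)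
    (hfb : ∀ y v, ‖f y v‖ ≤ lf * (‖y‖ + ‖v‖))
    (huLip : ∀ y y', ‖u y' - u y‖ ≤ lu * ‖y' - y‖) (hu0 : u 0 = 0) (y z : E) :
    ‖f y (u z)‖ ≤ (1 + lu) * lf * (‖y‖ + ‖z - y‖) := by
  have hz : ‖z‖ ≤ ‖y‖ + ‖z - y‖ := norm_le_norm_add_norm_sub' z y
  calc ‖f y (u z)‖ ≤ lf * (‖y‖ + lu * ‖z‖) :=
        norm_apply_held_control_le hlf hfb huLip hu0 y z
    _ ≤ lf * (‖y‖ + lu * (‖y‖ + ‖z - y‖)) := by gcongr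
    _ ≤ (1 + lu) * lf * (‖y‖ + ‖z - y‖) := by nlinarith [norm_nonneg (z - y)]

theorem norm_apply_held_control_le_error_add_sample (hlf : 0 ≤ lf) (hlu : 0 ≤ lu)
    (hfb : ∀ y v, ‖f y v‖ ≤ lf * (‖y‖ + ‖v‖))
    (huLip : ∀ y y', ‖u y' - u y‖ ≤ lu * ‖y' - y‖) (hu0 : u 0 = 0) (y z : E) :
    ‖f y (u z)‖ ≤ (1 + lu) * lf * ‖z - y‖ + (1 + lu) * lf * ‖z‖ := by
  have hy : ‖y‖ ≤ ‖z‖ + ‖z - y‖ := norm_le_norm_add_norm_sub z y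
  calc ‖f y (u z)‖ ≤ lf * (‖y‖ + lu * ‖z‖) :=
        norm_apply_held_control_le hlf hfb huLip hu0 y z
    _ ≤ lf * (‖z‖ + ‖z - y‖ + lu * ‖z‖) := by gcongr
    _ ≤ (1 + lu) * lf * ‖z - y‖ + (1 + lu) * lf * ‖z‖ := by
        nlinarith [norm_nonneg (z - y), mul_nonneg hlu hlf]

end HeldControl

section Displacement

variable {E : Type*} [NormedAddCommGroup E] [NormedSpace ℝ E] {x x' : ℝ → E} {a b : ℝ}

theorem norm_sub_le_integral_of_hasDerivAt_of_norm_le {φ : ℝ → ℝ} (hab : a ≤ b)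
    (hx : ∀ s ∈ Icc a b, HasDerivAt x (x' s) s) (hφ : ContinuousOn φ (Icc a b))
    (hbound : ∀ s ∈ Icc a b, ‖x' s‖ ≤ φ s) :
    ‖x a - x b‖ ≤ ∫ s in a..b, φ s := by
  rw [norm_sub_rev]
  refine norm_sub_le_integral_of_norm_deriv_le_of_le hab
    (fun s hs => (hx s hs).continuousAt.continuousWithinAt)
    (fun s hs => (hx s (Ioo_subset_Icc_self hs)).differentiableAt.differentiableWithinAt)
    (.of_forall fun s hs => ?_) (hφ.intervalIntegrable_of_Icc hab)
  rw [(hx s (Ioo_subset_Icc_self hs)).deriv]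
  exact hbound s (Ioo_subset_Icc_self hs)

theorem norm_sub_le_mul_exp_sub_one_of_norm_deriv_le {K : ℝ} (hab : a ≤ b)
    (hx : ∀ s ∈ Icc a b, HasDerivAt x (x' s) s)
    (hbound : ∀ s ∈ Icc a b, ‖x' s‖ ≤ K * ‖x a - x s‖ + K * ‖x a‖) :
    ‖x a - x b‖ ≤ ‖x a‖ * (exp (K * (b - a)) - 1) := by
  have hgron := norm_le_gronwallBound_of_norm_deriv_right_le (f := fun s => x a - x s)
    (f' := fun s => -x' s) (δ := 0)
    (fun s hs => ((hx s hs).continuousAt.continuousWithinAt).const_sub (x a))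
    (fun s hs => ((hx s (Ico_subset_Icc_self hs)).const_sub (x a)).hasDerivWithinAt)
    (by simp) (fun s hs => by simpa using hbound s (Ico_subset_Icc_self hs))
    b (right_mem_Icc.2 hab)
  rcases eq_or_ne K 0 with rfl | hK
  · simpa [gronwallBound_K0] using hgron
  · rw [gronwallBound_of_K_ne_0 hK] at hgron
    calc ‖x a - x b‖ ≤ 0 * exp (K * (b - a)) + K * ‖x a‖ / K * (exp (K * (b - a)) - 1) :=
          hgron
      _ = ‖x a‖ * (exp (K * (b - a)) - 1) := by field_simp; ring

end Displacement

theorem stmt_19_general {d m : ℕ}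
    (f : EuclideanSpace ℝ (Fin d) → EuclideanSpace ℝ (Fin m) → EuclideanSpace ℝ (Fin d))
    (u : EuclideanSpace ℝ (Fin d) → EuclideanSpace ℝ (Fin m))
    (lf lu : ℝ) (hlf : 0 < lf) (hlu : 0 < lu)
    (hfb : ∀ y v, ‖f y v‖ ≤ lf * (‖y‖ + ‖v‖))
    (huLip : ∀ y y', ‖u y' - u y‖ ≤ lu * ‖y' - y‖)
    (hu0 : u 0 = 0)
    (tk tk1 : ℝ)
    (x e : ℝ → EuclideanSpace ℝ (Fin d))
    (hxode : ∀ t ∈ Ico tk tk1, HasDerivAt x (f (x t) (u (x tk))) t)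
    (hedef : ∀ t ∈ Ico tk tk1, e t = x tk - x t) :
    ∀ t ∈ Ico tk tk1,
      ‖e t‖ ≤ (1 + lu) * lf * ∫ s in tk..t, (‖x s‖ + ‖e s‖) ∧
      ‖e t‖ ≤ ‖x tk‖ * (Real.exp ((1 + lu) * lf * (t - tk)) - 1) := by
  rintro t ⟨htk, ht⟩
  have hsub : Icc tk t ⊆ Ico tk tk1 := fun s hs => ⟨hs.1, hs.2.trans_lt ht⟩
  have hderiv : ∀ s ∈ Icc tk t, HasDerivAt x (f (x s) (u (x tk))) s :=
    fun s hs => hxode s (hsub hs)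
  have hxc : ContinuousOn x (Icc tk t) := fun s hs => (hderiv s hs).continuousAt.continuousWithinAt
  rw [hedef t ⟨htk, ht⟩]
  refine ⟨?_, norm_sub_le_mul_exp_sub_one_of_norm_deriv_le htk hderiv fun s _ =>
    norm_apply_held_control_le_error_add_sample hlf.le hlu.le hfb huLip hu0 _ _⟩
  calc ‖x tk - x t‖ ≤ ∫ s in tk..t, (1 + lu) * lf * (‖x s‖ + ‖x tk - x s‖) :=
        norm_sub_le_integral_of_hasDerivAt_of_norm_le htk hderiv
          (continuousOn_const.mul (hxc.norm.add (continuousOn_const.sub hxc).norm))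
          fun s _ => norm_apply_held_control_le_state_add_error hlf.le hlu.le hfb huLip hu0 _ _
    _ = (1 + lu) * lf * ∫ s in tk..t, (‖x s‖ + ‖e s‖) := by
        rw [integral_const_mul]
        congr 1
        refine integral_congr fun s hs => ?_
        rw [uIcc_of_le htk] at hs
        simp only [hedef s (hsub hs)]

/-- Error growth bound for the held-control closed loop: with
`‖f(y,v)‖ ≤ l_f(‖y‖+‖v‖)`, `u` `l_u`-Lipschitz, `u(0)=0`, `f(0,0)=0`, the
error `e(t) = x(t_k) - x(t)` satisfies the integral inequality
`‖e(t)‖ ≤ (1+l_u) l_f ∫_{t_k}^t (‖x(s)‖+‖e(s)‖) ds` and hence, by Grönwall,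
`‖e(t)‖ ≤ ‖x(t_k)‖ (e^{(1+l_u) l_f (t-t_k)} - 1)`. -/
theorem stmt_19 {d m : ℕ}
    (f : EuclideanSpace ℝ (Fin d) → EuclideanSpace ℝ (Fin m) → EuclideanSpace ℝ (Fin d))
    (u : EuclideanSpace ℝ (Fin d) → EuclideanSpace ℝ (Fin m))
    (lf lu : ℝ) (hlf : 0 < lf) (hlu : 0 < lu)
    (hfb : ∀ y v, ‖f y v‖ ≤ lf * (‖y‖ + ‖v‖))
    (huLip : ∀ y y', ‖u y' - u y‖ ≤ lu * ‖y' - y‖)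
    (hu0 : u 0 = 0) (hf0 : f 0 0 = 0)
    (tk tk1 : ℝ) (htk : tk < tk1)
    (x e : ℝ → EuclideanSpace ℝ (Fin d))
    (hxode : ∀ t ∈ Ico tk tk1, HasDerivAt x (f (x t) (u (x tk))) t)
    (hx_cont : ContinuousOn x (Ico tk tk1))
    (hedef : ∀ t ∈ Ico tk tk1, e t = x tk - x t) :
    ∀ t ∈ Ico tk tk1,
      ‖e t‖ ≤ (1 + lu) * lf * ∫ s in tk..t, (‖x s‖ + ‖e s‖) ∧
      ‖e t‖ ≤ ‖x tk‖ * (Real.exp ((1 + lu) * lf * (t - tk)) - 1) :=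
  stmt_19_general f u lf lu hlf hlu hfb huLip hu0 tk tk1 x e hxode hedef
end
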